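/- arXiv:1111.3399 — 2 statements merged into one kernel-verified Lean document; each statement's English description precedes it below -/
import Mathlib

section
/- Assume κ is UD-self-dual and 𝗊 : P → ℂ is such that 𝗊² satisfies the Kerov condition with parameter t. Then for every n ≥ 0, Σ_{λ ∈ 𝔾_n} ⟨Uⁿ δ_∅, δ_λ⟩ · ⟨Dⁿ δ_λ, δ_∅⟩ = n! (t)_n, where ⟨f, δ_λ⟩ denotes the coefficient of the vector f at the basis vector δ_λ and (t)_n := t(t+1)⋯(t+n−1) is the ascending Pochhammer symbol ((t)_0 = 1). -/
open scoped BigOperators Classical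

namespace IdealGraph

variable {P : Type*} [PartialOrder P]

/-- A finite order ideal of the poset `P`, encoded as a down-closed `Finset`. -/
def IsIdealF (s : Finset P) : Prop := ∀ ⦃x⦄, x ∈ s → ∀ ⦃y⦄, y ≤ x → y ∈ s

/-- The vertex set of the branching graph of ideals `𝔾 = J(P)`. -/
abbrev G (P : Type*) [PartialOrder P] := {s : Finset P // IsIdealF s}

/-- The `n`-th level `𝔾_n` of the branching graph. -/
abbrev Lvl (P : Type*) [PartialOrder P] (n : ℕ) := {s : Finset P // IsIdealF s ∧ s.card = n}

/-- `CoversF μ l` : `μ ↗ l` is an edge of the branching graph of ideals. -/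
def CoversF (μ l : Finset P) : Prop :=
  IsIdealF μ ∧ IsIdealF l ∧ μ ⊆ l ∧ l.card = μ.card + 1

/-- All levels `𝔾_n` of the graph are finite. -/
def LevelsFinite (P : Type*) [PartialOrder P] : Prop :=
  ∀ n : ℕ, {s : Finset P | IsIdealF s ∧ s.card = n}.Finite

/-- An edge multiplicity function is (strictly) positive on all edges. -/
def EdgePositive (κ : Finset P → Finset P → ℝ) : Prop :=
  ∀ μ l, CoversF μ l → 0 < κ μ l

/-- UD-self-duality of a multiplicity function: for every quadrangle `μ ρ ν λ`. -/
def UDSelfDual (κ : Finset P → Finset P → ℝ) : Prop :=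
  ∀ μ ρ l ν : Finset P, CoversF μ ρ → CoversF ρ ν → CoversF μ l → CoversF l ν →
    ρ ≠ l → κ μ l * κ μ ρ = κ l ν * κ ρ ν

/-- The value of a function `q : P → R` on the box `l ∖ μ` of an edge `μ ↗ l`. -/
noncomputable def bx {R : Type*} [AddCommMonoid R] (q : P → R) (μ l : Finset P) : R :=
  ∑ x ∈ l \ μ, q x

/-- The Kerov condition with parameter `t` for the function `q2 = 𝗊²`. -/
def KerovCond (κ : Finset P → Finset P → ℝ) (q2 : P → ℂ) (t : ℂ) : Prop :=
  ∀ l : Finset P, IsIdealF l →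
    (∑' ν : {ν : Finset P // CoversF l ν}, (κ l ν.1 : ℂ) ^ 2 * bx q2 l ν.1) -
      (∑' μ : {μ : Finset P // CoversF μ l}, (κ μ.1 l : ℂ) ^ 2 * bx q2 μ.1 l)
      = 2 * (l.card : ℂ) + t

/-- Weighted number of saturated chains of length `n` from the ideal `μ` up to the ideal `l`. -/
noncomputable def dimRel (κ : Finset P → Finset P → ℝ) : ℕ → Finset P → Finset P → ℝ
  | 0, μ, l => if μ = l then 1 else 0
  | n + 1, μ, l =>
      ∑ x ∈ l, if CoversF (l.erase x) l ∧ μ ⊆ l.erase x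
        then κ (l.erase x) l * dimRel κ n μ (l.erase x) else 0

/-- Relative dimension `dim(μ, l)`. -/
noncomputable def dimI (κ : Finset P → Finset P → ℝ) (μ l : Finset P) : ℝ :=
  dimRel κ (l.card - μ.card) μ l

/-- Dimension `dim l = dim(∅, l)`. -/
noncomputable def dimT (κ : Finset P → Finset P → ℝ) (l : Finset P) : ℝ :=
  dimI κ ∅ l

/-- The relative dimension function `P*_μ`. -/
noncomputable def Pstar (κ : Finset P → Finset P → ℝ) (μ l : Finset P) : ℝ :=
  (l.card.descFactorial μ.card : ℝ) * dimI κ μ l / dimT κ l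

/-- The mixed measure `M_ξ`. -/
noncomputable def Mxi (κ : Finset P → Finset P → ℝ) (q : P → ℝ) (t ξ : ℝ) (l : Finset P) : ℝ :=
  (1 - ξ) ^ t * ξ ^ l.card * (dimT κ l / (Nat.factorial l.card : ℝ)) ^ 2 * ∏ x ∈ l, q x ^ 2

/-- The coherent measure `M_n(l)` (for `n = |l|`). -/
noncomputable def Mcoh (κ : Finset P → Finset P → ℝ) (q : P → ℝ) (t : ℝ) (l : Finset P) : ℝ :=
  dimT κ l ^ 2 * (∏ x ∈ l, q x ^ 2) /
    ((Nat.factorial l.card : ℝ) * Polynomial.eval t (ascPochhammer ℝ l.card))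

/-- The jump rates `Q(l, ρ)` of the Markov jump dynamics. -/
noncomputable def Qrate (κ : Finset P → Finset P → ℝ) (q : P → ℝ) (t ξ : ℝ)
    (l ρ : Finset P) : ℝ :=
  if CoversF ρ l then (1 - ξ)⁻¹ * l.card * (κ ρ l * dimT κ ρ / dimT κ l)
  else if CoversF l ρ then
    (1 - ξ)⁻¹ * (ξ * ((l.card : ℝ) + t)) *
      ((Mcoh κ q t ρ / Mcoh κ q t l) * (κ l ρ * dimT κ l / dimT κ ρ))
  else if ρ = l then -((1 - ξ)⁻¹ * ((l.card : ℝ) + ξ * ((l.card : ℝ) + t)))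
  else 0

/-- The function `𝔐_l`. -/
noncomputable def Mfrak (κ : Finset P → Finset P → ℝ) (q : P → ℝ) (ξ : ℝ)
    (l ν : Finset P) : ℝ :=
  ∑ μ ∈ l.powerset.filter (fun s => IsIdealF s),
    (ξ / (ξ - 1)) ^ (l.card - μ.card) *
      (dimI κ μ l / (Nat.factorial (l.card - μ.card) : ℝ)) *
      (∏ x ∈ l \ μ, q x ^ 2) * Pstar κ μ ν

/-- The operator `U` built from `κ` and `q`. -/
noncomputable def Uop (κ : Finset P → Finset P → ℝ) (q : P → ℂ) (f : Finset P → ℂ) :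
    Finset P → ℂ :=
  fun l => ∑' μ : {μ : Finset P // CoversF μ l}, (κ μ.1 l : ℂ) * bx q μ.1 l * f μ.1

/-- The operator `D` built from `κ` and `q`. -/
noncomputable def Dop (κ : Finset P → Finset P → ℝ) (q : P → ℂ) (f : Finset P → ℂ) :
    Finset P → ℂ :=
  fun l => ∑' ν : {ν : Finset P // CoversF l ν}, (κ l ν.1 : ℂ) * bx q l ν.1 * f ν.1

/-- The standard basis vector `δ_l`. -/
noncomputable def delta (l : Finset P) : Finset P → ℂ := fun ρ => if ρ = l then 1 else 0


/- ====================== auxiliary lemmas ====================== -/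

section Aux
variable {P : Type*} [PartialOrder P]

lemma isIdealF_empty : IsIdealF (∅ : Finset P) := by
  intro x hx; simp at hx

lemma isIdealF_inter {a b : Finset P} (ha : IsIdealF a) (hb : IsIdealF b) :
    IsIdealF (a ∩ b) := by
  intro x hx y hy
  simp only [Finset.mem_inter] at hx ⊢
  exact ⟨ha hx.1 hy, hb hx.2 hy⟩

lemma isIdealF_union {a b : Finset P} (ha : IsIdealF a) (hb : IsIdealF b) :
    IsIdealF (a ∪ b) := by
  intro x hx y hy
  simp only [Finset.mem_union] at hx ⊢
  rcases hx with h | h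
  · exact Or.inl (ha h hy)
  · exact Or.inr (hb h hy)

lemma covers_sdiff_card {μ l : Finset P} (h : CoversF μ l) : (l \ μ).card = 1 := by
  rw [Finset.card_sdiff_of_subset h.2.2.1, h.2.2.2]; omega

lemma covers_sdiff {μ l : Finset P} (h : CoversF μ l) : ∃ x, l \ μ = {x} :=
  Finset.card_eq_one.mp (covers_sdiff_card h)

lemma bx_sq {q : P → ℂ} {μ l : Finset P} (h : CoversF μ l) :
    bx (fun x => q x ^ 2) μ l = (bx q μ l) ^ 2 := by
  obtain ⟨x, hx⟩ := covers_sdiff h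
  simp [bx, hx]

/-- completing a quadrangle downwards -/
lemma quad_down {μ ν lam : Finset P} (h1 : CoversF μ ν) (h2 : CoversF lam ν) (hne : lam ≠ μ) :
    CoversF (lam ∩ μ) μ ∧ CoversF (lam ∩ μ) lam ∧ lam ∪ μ = ν := by
  have hsub : lam ∪ μ ⊆ ν := Finset.union_subset h2.2.2.1 h1.2.2.1
  have hcards : lam.card = μ.card := by
    have := h1.2.2.2; have := h2.2.2.2; omega
  have huni : lam ∪ μ = ν := by
    by_contra hneq
    have hlt : (lam ∪ μ).card < ν.card :=
      Finset.card_lt_card (Finset.ssubset_iff_subset_ne.mpr ⟨hsub, hneq⟩)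
    have h3 : μ ⊆ lam ∪ μ := Finset.subset_union_right
    have h4 : (lam ∪ μ).card ≤ μ.card := by
      have := h1.2.2.2; omega
    have h5 : lam ∪ μ = μ := Finset.eq_of_subset_of_card_le h3 h4 |>.symm
    have h6 : lam ⊆ μ := by
      intro x hx; rw [← h5]; exact Finset.mem_union_left _ hx
    exact hne (Finset.eq_of_subset_of_card_le h6 (le_of_eq hcards.symm))
  have hcardint : (lam ∩ μ).card + 1 = μ.card := by
    have := Finset.card_inter_add_card_union lam μ
    rw [huni] at this
    have := h1.2.2.2; omega
  have hint : IsIdealF (lam ∩ μ) := isIdealF_inter h2.1 h1.1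
  refine ⟨⟨hint, h1.1, Finset.inter_subset_right, hcardint.symm⟩,
    ⟨hint, h2.1, Finset.inter_subset_left, by omega⟩, huni⟩

/-- completing a quadrangle upwards -/
lemma quad_up {ρ μ lam : Finset P} (h1 : CoversF ρ μ) (h2 : CoversF ρ lam) (hne : lam ≠ μ) :
    CoversF μ (lam ∪ μ) ∧ CoversF lam (lam ∪ μ) ∧ lam ∩ μ = ρ := by
  have hcards : lam.card = μ.card := by
    have := h1.2.2.2; have := h2.2.2.2; omega
  have hsub : ρ ⊆ lam ∩ μ := Finset.subset_inter h2.2.2.1 h1.2.2.1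
  have hint : lam ∩ μ = ρ := by
    by_contra hneq
    have hlt : ρ.card < (lam ∩ μ).card :=
      Finset.card_lt_card (Finset.ssubset_iff_subset_ne.mpr ⟨hsub, fun h => hneq h.symm⟩)
    have h4 : μ.card ≤ (lam ∩ μ).card := by have := h1.2.2.2; omega
    have h5 : lam ∩ μ = μ := Finset.eq_of_subset_of_card_le Finset.inter_subset_right h4
    have h6 : μ ⊆ lam := fun x hx => (Finset.mem_inter.mp (h5.symm ▸ hx)).1
    exact hne (Finset.eq_of_subset_of_card_le h6 hcards.le).symm
  have hcardu : (lam ∪ μ).card = μ.card + 1 := by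
    have h := Finset.card_inter_add_card_union lam μ
    rw [hint] at h
    have := h1.2.2.2; omega
  have huni : IsIdealF (lam ∪ μ) := isIdealF_union h2.2.1 h1.2.1
  exact ⟨⟨h1.2.1, huni, Finset.subset_union_right, hcardu⟩,
    ⟨h2.2.1, huni, Finset.subset_union_left, by omega⟩, hint⟩

end Aux

section Aux2
variable {P : Type*} [PartialOrder P]

/-- finset of lower covers -/
noncomputable def lowCov (l : Finset P) : Finset (Finset P) :=
  l.powerset.filter (fun μ => CoversF μ l)

lemma mem_lowCov {l μ : Finset P} : μ ∈ lowCov l ↔ CoversF μ l := by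
  simp only [lowCov, Finset.mem_filter, Finset.mem_powerset]
  exact ⟨fun h => h.2, fun h => ⟨h.2.2.1, h⟩⟩

/-- finset of upper covers -/
noncomputable def upCov (hLF : LevelsFinite P) (l : Finset P) : Finset (Finset P) :=
  (hLF (l.card + 1)).toFinset.filter (fun ν => CoversF l ν)

lemma mem_upCov {hLF : LevelsFinite P} {l ν : Finset P} :
    ν ∈ upCov hLF l ↔ CoversF l ν := by
  simp only [upCov, Finset.mem_filter, Set.Finite.mem_toFinset, Set.mem_setOf_eq]
  exact ⟨fun h => h.2, fun h => ⟨⟨h.2.1, h.2.2.2⟩, h⟩⟩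

/-- tsum over a subtype with finitely many elements is a finite sum -/
lemma tsum_sub_eq {α : Type*} {p : α → Prop} (s : Finset α)
    (h : ∀ x, x ∈ s ↔ p x) (f : α → ℂ) :
    ∑' x : Subtype p, f x.1 = ∑ x ∈ s, f x := by
  haveI : Fintype (Subtype p) := Fintype.ofFinset s h
  rw [tsum_fintype, Finset.sum_subtype s h]

variable (κ : Finset P → Finset P → ℝ) (q : P → ℂ)

lemma Uop_eq (f : Finset P → ℂ) (l : Finset P) :
    Uop κ q f l = ∑ μ ∈ lowCov l, (κ μ l : ℂ) * bx q μ l * f μ := by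
  exact tsum_sub_eq (lowCov l) (fun x => mem_lowCov) (fun μ => (κ μ l : ℂ) * bx q μ l * f μ)

lemma Dop_eq (hLF : LevelsFinite P) (f : Finset P → ℂ) (l : Finset P) :
    Dop κ q f l = ∑ ν ∈ upCov hLF l, (κ l ν : ℂ) * bx q l ν * f ν := by
  exact tsum_sub_eq (upCov hLF l) (fun x => mem_upCov) (fun ν => (κ l ν : ℂ) * bx q l ν * f ν)

/-- weighted path count from ρ up to l -/
noncomputable def pathW : ℕ → Finset P → Finset P → ℂ
  | 0, ρ, l => if ρ = l then 1 else 0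
  | n + 1, ρ, l => ∑ μ ∈ lowCov l, (κ μ l : ℂ) * bx q μ l * pathW n ρ μ

lemma pathW_bot (hLF : LevelsFinite P) :
    ∀ (n : ℕ) (ρ l : Finset P), pathW κ q (n + 1) ρ l
      = ∑ ν ∈ upCov hLF ρ, (κ ρ ν : ℂ) * bx q ρ ν * pathW κ q n ν l := by
  intro n
  induction n with
  | zero =>
    intro ρ l
    rw [pathW]
    have h1 : ∀ μ ∈ lowCov l, (κ μ l : ℂ) * bx q μ l * pathW κ q 0 ρ μ
        = if ρ = μ then (κ μ l : ℂ) * bx q μ l else 0 := by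
      intro μ _; rw [pathW]; split_ifs <;> ring
    have h2 : ∀ ν ∈ upCov hLF ρ, (κ ρ ν : ℂ) * bx q ρ ν * pathW κ q 0 ν l
        = if ν = l then (κ ρ ν : ℂ) * bx q ρ ν else 0 := by
      intro ν _; rw [pathW]; split_ifs <;> ring
    rw [Finset.sum_congr rfl h1, Finset.sum_congr rfl h2,
      Finset.sum_ite_eq (lowCov l) ρ, Finset.sum_ite_eq' (upCov hLF ρ) l]
    by_cases h : CoversF ρ l
    · rw [if_pos (mem_lowCov.mpr h), if_pos (mem_upCov.mpr h)]
    · rw [if_neg (fun hc => h (mem_lowCov.mp hc)), if_neg (fun hc => h (mem_upCov.mp hc))]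
  | succ n ih =>
    intro ρ l
    rw [pathW]
    calc ∑ μ ∈ lowCov l, (κ μ l : ℂ) * bx q μ l * pathW κ q (n + 1) ρ μ
        = ∑ μ ∈ lowCov l, ∑ ν ∈ upCov hLF ρ,
            (κ μ l : ℂ) * bx q μ l * ((κ ρ ν : ℂ) * bx q ρ ν * pathW κ q n ν μ) := by
          refine Finset.sum_congr rfl fun μ _ => ?_
          rw [ih ρ μ, Finset.mul_sum]
      _ = ∑ ν ∈ upCov hLF ρ, ∑ μ ∈ lowCov l,
            (κ ρ ν : ℂ) * bx q ρ ν * ((κ μ l : ℂ) * bx q μ l * pathW κ q n ν μ) := by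
          rw [Finset.sum_comm]
          exact Finset.sum_congr rfl fun μ _ => Finset.sum_congr rfl fun ν _ => by ring
      _ = ∑ ν ∈ upCov hLF ρ, (κ ρ ν : ℂ) * bx q ρ ν * pathW κ q (n + 1) ν l := by
          refine Finset.sum_congr rfl fun ν _ => ?_
          rw [pathW, Finset.mul_sum]

lemma Uop_iterate (n : ℕ) (ρ : Finset P) :
    ∀ l, (Uop κ q)^[n] (delta ρ) l = pathW κ q n ρ l := by
  induction n with
  | zero => intro l; rw [pathW]; simp [delta, eq_comm]
  | succ n ih =>
    intro l
    rw [Function.iterate_succ_apply', Uop_eq, pathW]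
    exact Finset.sum_congr rfl fun μ _ => by rw [ih μ]

lemma Dop_iterate (hLF : LevelsFinite P) (n : ℕ) (l : Finset P) :
    ∀ ρ, (Dop κ q)^[n] (delta l) ρ = pathW κ q n ρ l := by
  induction n with
  | zero => intro ρ; rw [pathW]; simp [delta]
  | succ n ih =>
    intro ρ
    rw [Function.iterate_succ_apply', Dop_eq κ q hLF, pathW_bot κ q hLF]
    exact Finset.sum_congr rfl fun ν _ => by rw [ih ν]

lemma pathW_support : ∀ (n : ℕ) (l : Finset P),
    pathW κ q n ∅ l ≠ 0 → IsIdealF l ∧ l.card = n := by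
  intro n
  induction n with
  | zero =>
    intro l h
    rw [pathW] at h
    split_ifs at h with he
    · exact he ▸ ⟨isIdealF_empty, rfl⟩
    · exact absurd rfl h
  | succ n ih =>
    intro l h
    rw [pathW] at h
    obtain ⟨μ, hμ, hne⟩ := Finset.exists_ne_zero_of_sum_ne_zero h
    have hc : CoversF μ l := mem_lowCov.mp hμ
    have hp : pathW κ q n ∅ μ ≠ 0 := fun h0 => hne (by rw [h0, mul_zero])
    obtain ⟨_, hcard⟩ := ih μ hp
    exact ⟨hc.2.1, by rw [hc.2.2.2, hcard]⟩

end Aux2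

section Aux3
variable {P : Type*} [PartialOrder P] (κ : Finset P → Finset P → ℝ) (q : P → ℂ)

lemma kerov_fin (hLF : LevelsFinite P) {t : ℂ} (hK : KerovCond κ (fun x => q x ^ 2) t)
    {l : Finset P} (hl : IsIdealF l) :
    (∑ ν ∈ upCov hLF l, (κ l ν : ℂ) ^ 2 * (bx q l ν) ^ 2)
      - ∑ μ ∈ lowCov l, (κ μ l : ℂ) ^ 2 * (bx q μ l) ^ 2 = 2 * l.card + t := by
  have h := hK l hl
  rw [tsum_sub_eq (upCov hLF l) (fun x => mem_upCov)
      (fun ν => (κ l ν : ℂ) ^ 2 * bx (fun x => q x ^ 2) l ν),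
    tsum_sub_eq (lowCov l) (fun x => mem_lowCov)
      (fun μ => (κ μ l : ℂ) ^ 2 * bx (fun x => q x ^ 2) μ l)] at h
  have e1 : ∑ ν ∈ upCov hLF l, (κ l ν : ℂ) ^ 2 * (bx q l ν) ^ 2
      = ∑ ν ∈ upCov hLF l, (κ l ν : ℂ) ^ 2 * bx (fun x => q x ^ 2) l ν :=
    Finset.sum_congr rfl fun ν hν => by rw [bx_sq (mem_upCov.mp hν)]
  have e2 : ∑ μ ∈ lowCov l, (κ μ l : ℂ) ^ 2 * (bx q μ l) ^ 2
      = ∑ μ ∈ lowCov l, (κ μ l : ℂ) ^ 2 * bx (fun x => q x ^ 2) μ l :=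
    Finset.sum_congr rfl fun μ hμ => by rw [bx_sq (mem_lowCov.mp hμ)]
  rw [e1, e2]; exact h

lemma comm_lemma (hLF : LevelsFinite P) (hUD : UDSelfDual κ) {t : ℂ}
    (hK : KerovCond κ (fun x => q x ^ 2) t) {f : Finset P → ℂ} {n : ℕ}
    (hf : ∀ l, f l ≠ 0 → IsIdealF l ∧ l.card = n) (m : Finset P) :
    Dop κ q (Uop κ q f) m = Uop κ q (Dop κ q f) m + (2 * n + t) * f m := by
  rw [Dop_eq κ q hLF, Uop_eq]
  have key : ∀ ν ∈ upCov hLF m,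
      (κ m ν : ℂ) * bx q m ν * Uop κ q f ν
        = ((κ m ν : ℂ) * bx q m ν) ^ 2 * f m
          + ∑ lam ∈ (lowCov ν).erase m,
              (κ m ν : ℂ) * bx q m ν * ((κ lam ν : ℂ) * bx q lam ν) * f lam := by
    intro ν hν
    have hmν : m ∈ lowCov ν := mem_lowCov.mpr (mem_upCov.mp hν)
    rw [Uop_eq, ← Finset.add_sum_erase _ _ hmν, mul_add, Finset.mul_sum]
    congr 1
    · ring
    · exact Finset.sum_congr rfl fun lam _ => by ring
  have key2 : ∀ ρ ∈ lowCov m,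
      (κ ρ m : ℂ) * bx q ρ m * Dop κ q f ρ
        = ((κ ρ m : ℂ) * bx q ρ m) ^ 2 * f m
          + ∑ lam ∈ (upCov hLF ρ).erase m,
              (κ ρ m : ℂ) * bx q ρ m * ((κ ρ lam : ℂ) * bx q ρ lam) * f lam := by
    intro ρ hρ
    have hmρ : m ∈ upCov hLF ρ := mem_upCov.mpr (mem_lowCov.mp hρ)
    rw [Dop_eq κ q hLF, ← Finset.add_sum_erase _ _ hmρ, mul_add, Finset.mul_sum]
    congr 1
    · ring
    · exact Finset.sum_congr rfl fun lam _ => by ring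
  rw [Finset.sum_congr rfl key, Finset.sum_congr rfl key2,
    Finset.sum_add_distrib, Finset.sum_add_distrib, ← Finset.sum_mul, ← Finset.sum_mul,
    Finset.sum_sigma' (upCov hLF m) (fun ν => (lowCov ν).erase m)
      (fun ν lam => (κ m ν : ℂ) * bx q m ν * ((κ lam ν : ℂ) * bx q lam ν) * f lam),
    Finset.sum_sigma' (lowCov m) (fun ρ => (upCov hLF ρ).erase m)
      (fun ρ lam => (κ ρ m : ℂ) * bx q ρ m * ((κ ρ lam : ℂ) * bx q ρ lam) * f lam)]
  -- off-diagonal sums are equal via the quadrangle bijection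
  have hoff : ∑ x ∈ (upCov hLF m).sigma (fun ν => (lowCov ν).erase m),
        (κ m x.1 : ℂ) * bx q m x.1 * ((κ x.2 x.1 : ℂ) * bx q x.2 x.1) * f x.2
      = ∑ y ∈ (lowCov m).sigma (fun ρ => (upCov hLF ρ).erase m),
        (κ y.1 m : ℂ) * bx q y.1 m * ((κ y.1 y.2 : ℂ) * bx q y.1 y.2) * f y.2 := by
    refine Finset.sum_nbij' (fun x => ⟨x.2 ∩ m, x.2⟩) (fun y => ⟨y.2 ∪ m, y.2⟩)
      ?_ ?_ ?_ ?_ ?_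
    · rintro ⟨ν, lam⟩ hx
      rw [Finset.mem_sigma, Finset.mem_erase] at hx
      obtain ⟨hν, hne, hlam⟩ := hx
      obtain ⟨hA, hB, -⟩ := quad_down (mem_upCov.mp hν) (mem_lowCov.mp hlam) hne
      rw [Finset.mem_sigma, Finset.mem_erase]
      exact ⟨mem_lowCov.mpr hA, hne, mem_upCov.mpr hB⟩
    · rintro ⟨ρ, lam⟩ hy
      rw [Finset.mem_sigma, Finset.mem_erase] at hy
      obtain ⟨hρ, hne, hlam⟩ := hy
      obtain ⟨hA, hB, -⟩ := quad_up (mem_lowCov.mp hρ) (mem_upCov.mp hlam) hne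
      rw [Finset.mem_sigma, Finset.mem_erase]
      exact ⟨mem_upCov.mpr hA, hne, mem_lowCov.mpr hB⟩
    · rintro ⟨ν, lam⟩ hx
      rw [Finset.mem_sigma, Finset.mem_erase] at hx
      obtain ⟨hν, hne, hlam⟩ := hx
      obtain ⟨-, -, hU⟩ := quad_down (mem_upCov.mp hν) (mem_lowCov.mp hlam) hne
      simp only [Sigma.mk.inj_iff, heq_eq_eq, and_true]
      exact hU
    · rintro ⟨ρ, lam⟩ hy
      rw [Finset.mem_sigma, Finset.mem_erase] at hy
      obtain ⟨hρ, hne, hlam⟩ := hy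
      obtain ⟨-, -, hI⟩ := quad_up (mem_lowCov.mp hρ) (mem_upCov.mp hlam) hne
      simp only [Sigma.mk.inj_iff, heq_eq_eq, and_true]
      exact hI
    · rintro ⟨ν, lam⟩ hx
      rw [Finset.mem_sigma, Finset.mem_erase] at hx
      obtain ⟨hν, hne, hlam⟩ := hx
      dsimp only at hν hne hlam ⊢
      have h1 := mem_upCov.mp hν
      have h2 := mem_lowCov.mp hlam
      obtain ⟨hA, hB, hU⟩ := quad_down h1 h2 hne
      have hk : κ (lam ∩ m) lam * κ (lam ∩ m) m = κ lam ν * κ m ν :=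
        hUD (lam ∩ m) m lam ν hA h1 hB h2 (fun h => hne h.symm)
      have hkC : (κ (lam ∩ m) lam : ℂ) * (κ (lam ∩ m) m : ℂ)
          = (κ lam ν : ℂ) * (κ m ν : ℂ) := by
        have := congrArg (fun x : ℝ => (x : ℂ)) hk
        push_cast at this
        exact this
      have hb1 : ν \ m = lam \ (lam ∩ m) := by
        rw [← hU]; ext x
        simp only [Finset.mem_sdiff, Finset.mem_union, Finset.mem_inter]
        tauto
      have hb2 : ν \ lam = m \ (lam ∩ m) := by
        rw [← hU]; ext x
        simp only [Finset.mem_sdiff, Finset.mem_union, Finset.mem_inter]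
        tauto
      have hbx1 : bx q m ν = bx q (lam ∩ m) lam := by unfold bx; rw [hb1]
      have hbx2 : bx q lam ν = bx q (lam ∩ m) m := by unfold bx; rw [hb2]
      rw [hbx1, hbx2]
      linear_combination (-(bx q (lam ∩ m) lam * bx q (lam ∩ m) m * f lam)) * hkC
  rw [hoff]
  -- diagonal terms give the Kerov condition
  by_cases hfm : f m = 0
  · rw [hfm]; ring
  · obtain ⟨hid, hcard⟩ := hf m hfm
    have hker := kerov_fin κ q hLF hK hid
    have e1 : ∑ ν ∈ upCov hLF m, ((κ m ν : ℂ) * bx q m ν) ^ 2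
        = ∑ ν ∈ upCov hLF m, (κ m ν : ℂ) ^ 2 * (bx q m ν) ^ 2 :=
      Finset.sum_congr rfl fun ν _ => mul_pow _ _ _
    have e2 : ∑ ρ ∈ lowCov m, ((κ ρ m : ℂ) * bx q ρ m) ^ 2
        = ∑ ρ ∈ lowCov m, (κ ρ m : ℂ) ^ 2 * (bx q ρ m) ^ 2 :=
      Finset.sum_congr rfl fun ρ _ => mul_pow _ _ _
    rw [hcard] at hker
    rw [e1, e2]
    linear_combination f m * hker

end Aux3

section Aux4
variable {P : Type*} [PartialOrder P] (κ : Finset P → Finset P → ℝ) (q : P → ℂ)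

lemma Uop_mul_const (c : ℂ) (g : Finset P → ℂ) (m : Finset P) :
    Uop κ q (fun l => c * g l) m = c * Uop κ q g m := by
  rw [Uop_eq, Uop_eq, Finset.mul_sum]
  exact Finset.sum_congr rfl fun μ _ => by ring

lemma Dop_delta_empty (hLF : LevelsFinite P) :
    Dop κ q (delta (∅ : Finset P)) = fun _ => 0 := by
  funext l
  rw [Dop_eq κ q hLF]
  apply Finset.sum_eq_zero
  intro ν hν
  have hc := mem_upCov.mp hν
  have hne : ν ≠ ∅ := by
    intro h
    have := hc.2.2.2
    rw [h] at this
    simp at this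
  rw [delta, if_neg hne, mul_zero]

lemma DA (hLF : LevelsFinite P) (hUD : UDSelfDual κ) {t : ℂ}
    (hK : KerovCond κ (fun x => q x ^ 2) t) :
    ∀ (n : ℕ) (m : Finset P),
      Dop κ q ((Uop κ q)^[n + 1] (delta (∅ : Finset P))) m
        = ((n : ℂ) + 1) * ((n : ℂ) + t) * (Uop κ q)^[n] (delta (∅ : Finset P)) m := by
  intro n
  induction n with
  | zero =>
    intro m
    have hf : ∀ l : Finset P, delta (∅ : Finset P) l ≠ 0 → IsIdealF l ∧ l.card = 0 := by
      intro l hl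
      rw [delta] at hl
      split_ifs at hl with h
      · subst h; exact ⟨isIdealF_empty, rfl⟩
      · exact absurd rfl hl
    have h := comm_lemma κ q hLF hUD hK hf m
    rw [Function.iterate_one, h, Dop_delta_empty κ q hLF]
    have h0 : Uop κ q (fun _ => (0 : ℂ)) m = 0 := by
      rw [Uop_eq]
      exact Finset.sum_eq_zero fun μ _ => mul_zero _
    rw [h0, Function.iterate_zero_apply]
    push_cast
    ring
  | succ n ih =>
    intro m
    have hf : ∀ l : Finset P, (Uop κ q)^[n + 1] (delta (∅ : Finset P)) l ≠ 0 →
        IsIdealF l ∧ l.card = n + 1 := by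
      intro l hl
      rw [Uop_iterate] at hl
      exact pathW_support κ q (n + 1) l hl
    have h := comm_lemma κ q hLF hUD hK hf m
    rw [Function.iterate_succ_apply' (Uop κ q) (n + 1), h]
    have hD : Dop κ q ((Uop κ q)^[n + 1] (delta (∅ : Finset P)))
        = fun l => ((n : ℂ) + 1) * ((n : ℂ) + t) * (Uop κ q)^[n] (delta (∅ : Finset P)) l :=
      funext ih
    rw [hD]
    have hsm := Uop_mul_const κ q (((n : ℂ) + 1) * ((n : ℂ) + t))
      ((Uop κ q)^[n] (delta (∅ : Finset P))) m
    rw [hsm, ← Function.iterate_succ_apply' (Uop κ q) n]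
    push_cast
    ring

end Aux4

/-- the normalizing constants: `Σ_{λ∈𝔾_n} ⟨Uⁿδ_∅,δ_λ⟩⟨Dⁿδ_λ,δ_∅⟩ = n!(t)_n`. -/
theorem statement4 {P : Type*} [PartialOrder P]
    (κ : Finset P → Finset P → ℝ) (q : P → ℂ) (t : ℂ)
    (hκ : EdgePositive κ) (hLF : LevelsFinite P) (hUD : UDSelfDual κ)
    (hK : KerovCond κ (fun x => q x ^ 2) t) :
    ∀ n : ℕ,
      ∑' l : Lvl P n,
          (Uop κ q)^[n] (delta (∅ : Finset P)) l.1 *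
            (Dop κ q)^[n] (delta l.1) (∅ : Finset P)
        = (Nat.factorial n : ℂ) * Polynomial.eval t (ascPochhammer ℂ n) := by
  intro n
  have hmem : ∀ k : ℕ, ∀ x : Finset P,
      x ∈ (hLF k).toFinset ↔ (IsIdealF x ∧ x.card = k) := by
    intro k x
    rw [Set.Finite.mem_toFinset]
    exact Iff.rfl
  have htsum : ∀ k : ℕ, (∑' l : Lvl P k,
        (Uop κ q)^[k] (delta (∅ : Finset P)) l.1 *
          (Dop κ q)^[k] (delta l.1) (∅ : Finset P))
      = ∑ x ∈ (hLF k).toFinset, pathW κ q k ∅ x * pathW κ q k ∅ x := by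
    intro k
    rw [tsum_sub_eq ((hLF k).toFinset) (hmem k)
      (fun x => (Uop κ q)^[k] (delta (∅ : Finset P)) x *
        (Dop κ q)^[k] (delta x) (∅ : Finset P))]
    exact Finset.sum_congr rfl fun x _ => by
      rw [Uop_iterate, Dop_iterate κ q hLF]
  induction n with
  | zero =>
    rw [htsum 0]
    have h1 : ∀ x ∈ (hLF 0).toFinset,
        pathW κ q 0 ∅ x * pathW κ q 0 ∅ x = if (∅ : Finset P) = x then 1 else 0 := by
      intro x _
      rw [pathW]
      split_ifs <;> norm_num
    rw [Finset.sum_congr rfl h1, Finset.sum_ite_eq ((hLF 0).toFinset) ∅ (fun _ => (1 : ℂ)),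
      if_pos ((hmem 0 ∅).mpr ⟨isIdealF_empty, Finset.card_empty⟩)]
    simp [ascPochhammer_zero]
  | succ n ih =>
    rw [htsum n] at ih
    rw [htsum (n + 1)]
    have step1 : ∑ x ∈ (hLF (n + 1)).toFinset, pathW κ q (n + 1) ∅ x * pathW κ q (n + 1) ∅ x
        = ∑ x ∈ ((hLF (n + 1)).toFinset).sigma (fun ν => lowCov ν),
            (κ x.2 x.1 : ℂ) * bx q x.2 x.1 * pathW κ q n ∅ x.2 * pathW κ q (n + 1) ∅ x.1 := by
      rw [← Finset.sum_sigma' ((hLF (n + 1)).toFinset) (fun ν => lowCov ν)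
        (fun ν lam => (κ lam ν : ℂ) * bx q lam ν * pathW κ q n ∅ lam * pathW κ q (n + 1) ∅ ν)]
      refine Finset.sum_congr rfl fun ν _ => ?_
      rw [pathW, Finset.sum_mul]
    have step2 : ∑ x ∈ ((hLF (n + 1)).toFinset).sigma (fun ν => lowCov ν),
            (κ x.2 x.1 : ℂ) * bx q x.2 x.1 * pathW κ q n ∅ x.2 * pathW κ q (n + 1) ∅ x.1
        = ∑ y ∈ ((hLF n).toFinset).sigma (fun lam => upCov hLF lam),
            (κ y.1 y.2 : ℂ) * bx q y.1 y.2 * pathW κ q n ∅ y.1 * pathW κ q (n + 1) ∅ y.2 := by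
      refine Finset.sum_nbij' (fun x => ⟨x.2, x.1⟩) (fun y => ⟨y.2, y.1⟩) ?_ ?_ ?_ ?_ ?_
      · rintro ⟨ν, lam⟩ hx
        rw [Finset.mem_sigma] at hx ⊢
        obtain ⟨hν, hlam⟩ := hx
        dsimp only at hν hlam ⊢
        have hc := mem_lowCov.mp hlam
        have hν' := (hmem (n + 1) ν).mp hν
        refine ⟨(hmem n lam).mpr ⟨hc.1, ?_⟩, mem_upCov.mpr hc⟩
        have := hc.2.2.2
        omega
      · rintro ⟨lam, ν⟩ hy
        rw [Finset.mem_sigma] at hy ⊢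
        obtain ⟨hlam, hν⟩ := hy
        dsimp only at hlam hν ⊢
        have hc := mem_upCov.mp hν
        have hlam' := (hmem n lam).mp hlam
        refine ⟨(hmem (n + 1) ν).mpr ⟨hc.2.1, ?_⟩, mem_lowCov.mpr hc⟩
        have := hc.2.2.2
        omega
      · rintro ⟨ν, lam⟩ _; rfl
      · rintro ⟨lam, ν⟩ _; rfl
      · rintro ⟨ν, lam⟩ _; rfl
    have step3 : ∑ y ∈ ((hLF n).toFinset).sigma (fun lam => upCov hLF lam),
            (κ y.1 y.2 : ℂ) * bx q y.1 y.2 * pathW κ q n ∅ y.1 * pathW κ q (n + 1) ∅ y.2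
        = ∑ lam ∈ (hLF n).toFinset, ((n : ℂ) + 1) * ((n : ℂ) + t) *
            (pathW κ q n ∅ lam * pathW κ q n ∅ lam) := by
      rw [Finset.sum_sigma]
      refine Finset.sum_congr rfl fun lam _ => ?_
      have hin : ∑ ν ∈ upCov hLF lam,
          (κ lam ν : ℂ) * bx q lam ν * pathW κ q n ∅ lam * pathW κ q (n + 1) ∅ ν
          = pathW κ q n ∅ lam * ∑ ν ∈ upCov hLF lam,
              (κ lam ν : ℂ) * bx q lam ν * pathW κ q (n + 1) ∅ ν := by
        rw [Finset.mul_sum]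
        exact Finset.sum_congr rfl fun ν _ => by ring
      rw [hin]
      have hd : ∑ ν ∈ upCov hLF lam,
          (κ lam ν : ℂ) * bx q lam ν * pathW κ q (n + 1) ∅ ν
          = Dop κ q ((Uop κ q)^[n + 1] (delta (∅ : Finset P))) lam := by
        rw [Dop_eq κ q hLF]
        exact Finset.sum_congr rfl fun ν _ => by rw [Uop_iterate]
      rw [hd, DA κ q hLF hUD hK n lam, Uop_iterate]
      ring
    rw [step1, step2, step3, ← Finset.mul_sum, ih, Nat.factorial_succ,
      ascPochhammer_succ_right]
    simp only [Polynomial.eval_mul, Polynomial.eval_add, Polynomial.eval_X,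
      Polynomial.eval_natCast]
    push_cast
    ring


end IdealGraph
end

section
/- Assume κ is UD-self-dual and 𝗊 : P → ℝ_{>0} is such that 𝗊² satisfies the Kerov condition with a parameter t > 0; fix ξ ∈ (0,1). Then for all μ, λ ∈ 𝔾: (i) Σ_{ϰ : ϰ ↗ λ} κ(ϰ,λ) 𝗊(λ∖ϰ) √(M_ξ(ϰ)) P*_μ(ϰ) = ξ^{−1/2} (|λ| − |μ|) √(M_ξ(λ)) P*_μ(λ); and (ii) Σ_{ν : ν ↘ λ} κ(λ,ν) 𝗊(ν∖λ) √(M_ξ(ν)) P*_μ(ν) = ξ^{1/2} (|λ| + |μ| + t) √(M_ξ(λ)) P*_μ(λ) + ξ^{1/2} Σ_{ρ : ρ ↗ μ} κ(ρ,μ) 𝗊(μ∖ρ)² √(M_ξ(λ)) P*_ρ(λ). -/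
open scoped BigOperators Classical

namespace IdealGraph

variable {P : Type*} [PartialOrder P]

/-!
Write `d_μ(λ) = dim(μ,λ) ∏_{λ∖μ} 𝗊` (`weightedDim`). Up to a factor depending only on `μ`,
`√M_ξ(λ) P*_μ(λ)` equals `ξ^{|λ|/2} |λ|^{↓|μ|} / |λ|! · d_μ(λ)`, so both identities are statements
about the operators `U g(λ) = Σ_{ϰ↗λ} κ 𝗊 g(ϰ)` and `D g(λ) = Σ_{ν↘λ} κ 𝗊 g(ν)` applied to `d_μ`.
The branching rule for dimensions gives `U d_μ = d_μ - δ_μ`. UD-self-duality matches the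
off-diagonal terms of `DU` and `UD` quadrangle by quadrangle and the Kerov condition evaluates the
diagonal ones, so `DU - UD = 2|λ| + t`; induction on `|λ|` then yields
`D d_μ = (|λ| - |μ| + 1)(|λ| + |μ| + t) d_μ + Σ_{ρ↗μ} κ 𝗊 d_ρ`.
-/

open Finset

theorem bx_insert {P R : Type*} [AddCommMonoid R] (q : P → R) {μ : Finset P} {a : P}
    (ha : a ∉ μ) : bx q μ (insert a μ) = q a := by
  rw [bx, insert_sdiff_cancel ha, sum_singleton]

theorem tsum_subtype_eq_sum {α M : Type*} [AddCommMonoid M] [TopologicalSpace M]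
    {p : α → Prop} (E : Finset α) (hE : ∀ x, x ∈ E ↔ p x) (f : α → M) :
    ∑' x : {x // p x}, f x.1 = ∑ x ∈ E, f x := by
  rw [← Finset.tsum_subtype E f]
  exact (Equiv.subtypeEquivRight fun x => (hE x).symm).tsum_eq (fun x => f x.1)

section Covers

variable {μ ρ l ν σ : Finset P}

theorem IsIdealF.union {s t : Finset P} (hs : IsIdealF s) (ht : IsIdealF t) :
    IsIdealF (s ∪ t) := by
  intro x hx y hy
  simp only [mem_union] at hx ⊢
  exact hx.imp (hs · hy) (ht · hy)

theorem IsIdealF.inter {s t : Finset P} (hs : IsIdealF s) (ht : IsIdealF t) :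
    IsIdealF (s ∩ t) := by
  intro x hx y hy
  simp only [mem_inter] at hx ⊢
  exact ⟨hs hx.1 hy, ht hx.2 hy⟩

theorem CoversF.exists_eq_insert (h : CoversF μ l) : ∃ a ∉ μ, l = insert a μ := by
  have hcov : μ ⋖ l := covBy_iff_card_sdiff_eq_one.2
    ⟨h.2.2.1, by rw [card_sdiff_of_subset h.2.2.1, h.2.2.2]; omega⟩
  obtain ⟨a, ha, rfl⟩ := covBy_iff_exists_insert.1 hcov
  exact ⟨a, ha, rfl⟩

theorem CoversF.ssubset (h : CoversF μ l) : μ ⊂ l := by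
  obtain ⟨a, ha, rfl⟩ := h.exists_eq_insert
  exact ssubset_insert ha

theorem CoversF.bx_pow {R : Type*} [CommSemiring R] (h : CoversF μ l) (f : P → R) (n : ℕ) :
    bx (fun x => f x ^ n) μ l = bx f μ l ^ n := by
  obtain ⟨a, ha, rfl⟩ := h.exists_eq_insert
  rw [bx_insert _ ha, bx_insert _ ha]

theorem CoversF.bx_eq_bx (hlν : CoversF l ν) (hρσ : CoversF ρ σ) (hσν : σ ⊆ ν) (hρl : ρ ⊆ l)
    (hσl : ¬σ ⊆ l) (q : P → ℝ) : bx q l ν = bx q ρ σ := by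
  obtain ⟨c, hc, rfl⟩ := hlν.exists_eq_insert
  obtain ⟨b, hb, rfl⟩ := hρσ.exists_eq_insert
  have hbl : b ∉ l := fun hbl => hσl (insert_subset hbl hρl)
  have hbc : b = c := by
    rcases mem_insert.1 (hσν (mem_insert_self b ρ)) with h | h
    · exact h
    · exact absurd h hbl
  rw [bx_insert _ hc, bx_insert _ hb, hbc]

theorem covers_inter_of_covers_of_covers {ϰ : Finset P} (hlν : CoversF l ν) (hϰν : CoversF ϰ ν)
    (hne : ϰ ≠ l) : ν = l ∪ ϰ ∧ CoversF (l ∩ ϰ) l ∧ CoversF (l ∩ ϰ) ϰ := by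
  have hcard := card_inter_add_card_union l ϰ
  have hϰl : ¬ϰ ⊆ l := fun h =>
    hne (eq_of_subset_of_card_le h (by have := hlν.2.2.2; have := hϰν.2.2.2; omega))
  have hlt : l.card < (l ∪ ϰ).card :=
    card_lt_card (ssubset_of_subset_of_ne subset_union_left fun h => hϰl (h ▸ subset_union_right))
  have hν : ν = l ∪ ϰ := (eq_of_subset_of_card_le (union_subset hlν.2.2.1 hϰν.2.2.1)
    (by have := hlν.2.2.2; omega)).symm
  have hid := hlν.1.inter hϰν.1
  refine ⟨hν, ⟨hid, hlν.1, inter_subset_left, ?_⟩, ⟨hid, hϰν.1, inter_subset_right, ?_⟩⟩ <;>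
  · have := hlν.2.2.2; have := hϰν.2.2.2; rw [hν] at *; omega

theorem covers_union_of_covers_of_covers (hρl : CoversF ρ l) (hρσ : CoversF ρ σ) (hne : σ ≠ l) :
    ρ = l ∩ σ ∧ CoversF l (l ∪ σ) ∧ CoversF σ (l ∪ σ) := by
  have hcard := card_inter_add_card_union l σ
  have hσl : ¬l ⊆ σ := fun h =>
    hne (eq_of_subset_of_card_le h (by have := hρl.2.2.2; have := hρσ.2.2.2; omega)).symm
  have hlt : (l ∩ σ).card < l.card :=
    card_lt_card (ssubset_of_subset_of_ne inter_subset_left fun h => hσl (h ▸ inter_subset_right))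
  have hρ : ρ = l ∩ σ := eq_of_subset_of_card_le (subset_inter hρl.2.2.1 hρσ.2.2.1)
    (by have := hρl.2.2.2; omega)
  have hid := hρl.2.1.union hρσ.2.1
  refine ⟨hρ, ⟨hρl.2.1, hid, subset_union_left, ?_⟩, ⟨hρσ.2.1, hid, subset_union_right, ?_⟩⟩ <;>
  · have := hρl.2.2.2; have := hρσ.2.2.2; rw [hρ] at *; omega

noncomputable def lowerCovers (l : Finset P) : Finset (Finset P) :=
  l.powerset.filter (CoversF · l)

theorem mem_lowerCovers {ϰ : Finset P} : ϰ ∈ lowerCovers l ↔ CoversF ϰ l := by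
  simp only [lowerCovers, mem_filter, mem_powerset, and_iff_right_iff_imp]
  exact fun h => h.2.2.1

noncomputable def upperCovers (hLF : LevelsFinite P) (l : Finset P) : Finset (Finset P) :=
  (hLF (l.card + 1)).toFinset.filter (CoversF l ·)

theorem mem_upperCovers {hLF : LevelsFinite P} : ν ∈ upperCovers hLF l ↔ CoversF l ν := by
  simp only [upperCovers, mem_filter, Set.Finite.mem_toFinset, Set.mem_ofPred_eq,
    and_iff_right_iff_imp]
  exact fun h => ⟨h.2.1, h.2.2.2⟩

theorem lowerCovers_nonempty (hl : IsIdealF l) (hne : l.Nonempty) : (lowerCovers l).Nonempty := by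
  obtain ⟨a, ha, hmax⟩ := l.exists_maximal hne
  refine ⟨l.erase a, mem_lowerCovers.2 ⟨?_, hl, erase_subset a l, ?_⟩⟩
  · intro x hx y hy
    have hxl := mem_of_mem_erase hx
    refine mem_erase.2 ⟨fun hya => ?_, hl hxl hy⟩
    subst hya
    exact (mem_erase.1 hx).1 (le_antisymm (hmax hxl hy) hy)
  · rw [card_erase_of_mem ha, Nat.sub_add_cancel (card_pos.2 ⟨a, ha⟩)]

theorem sum_erase_eq_sum_lowerCovers {M : Type*} [AddCommMonoid M] (F : Finset P → M)
    (hF : ∀ ϰ, ¬CoversF ϰ l → F ϰ = 0) :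
    ∑ x ∈ l, F (l.erase x) = ∑ ϰ ∈ lowerCovers l, F ϰ := by
  have himage : (l.filter fun x => CoversF (l.erase x) l).image l.erase = lowerCovers l := by
    ext ϰ
    simp only [mem_image, mem_filter, mem_lowerCovers]
    constructor
    · rintro ⟨x, ⟨-, hx⟩, rfl⟩
      exact hx
    · intro h
      obtain ⟨a, ha, rfl⟩ := h.exists_eq_insert
      exact ⟨a, ⟨mem_insert_self a ϰ, by rwa [erase_insert ha]⟩, erase_insert ha⟩
  rw [← himage, sum_image ((erase_injOn l).mono (filter_subset _ _)), sum_filter_of_ne]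
  exact fun x _ hx => by_contra fun h => hx (hF _ h)

end Covers

section Dimension

variable {κ : Finset P → Finset P → ℝ} {μ l : Finset P}

theorem subset_of_dimRel_ne_zero {n : ℕ} (h : dimRel κ n μ l ≠ 0) : μ ⊆ l := by
  cases n with
  | zero =>
    rw [dimRel] at h
    exact (ite_ne_right_iff.1 h).1.subset
  | succ n =>
    obtain ⟨x, hx, hne⟩ := exists_ne_zero_of_sum_ne_zero h
    exact (ite_ne_right_iff.1 hne).1.2.trans (erase_subset x l)

theorem dimI_eq_zero_of_not_subset (h : ¬μ ⊆ l) : dimI κ μ l = 0 :=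
  by_contra fun h' => h (subset_of_dimRel_ne_zero h')

theorem dimI_self (l : Finset P) : dimI κ l l = 1 := by
  rw [dimI, Nat.sub_self, dimRel, if_pos rfl]

theorem dimI_eq_sum_lowerCovers (hsub : μ ⊆ l) (hne : μ ≠ l) :
    dimI κ μ l = ∑ ϰ ∈ lowerCovers l, κ ϰ l * dimI κ μ ϰ := by
  have hlt : μ.card < l.card := card_lt_card (ssubset_of_subset_of_ne hsub hne)
  obtain ⟨k, hk⟩ : ∃ k, l.card - μ.card = k + 1 := ⟨l.card - μ.card - 1, by omega⟩
  rw [dimI, hk, dimRel]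
  refine (sum_erase_eq_sum_lowerCovers
    (fun ϰ => if CoversF ϰ l ∧ μ ⊆ ϰ then κ ϰ l * dimRel κ k μ ϰ else 0)
    fun ϰ h => if_neg (h ∘ And.left)).trans (sum_congr rfl fun ϰ hϰ => ?_)
  have hcov := mem_lowerCovers.1 hϰ
  by_cases hμϰ : μ ⊆ ϰ
  · have : ϰ.card - μ.card = k := by have := card_le_card hμϰ; have := hcov.2.2.2; omega
    rw [if_pos ⟨hcov, hμϰ⟩, dimI, this]
  · rw [if_neg (hμϰ ∘ And.right), dimI_eq_zero_of_not_subset hμϰ, mul_zero]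

theorem dimT_pos (hκ : EdgePositive κ) (hl : IsIdealF l) : 0 < dimT κ l := by
  induction l using Finset.strongInduction with
  | H l ih =>
  rcases l.eq_empty_or_nonempty with rfl | hne
  · rw [dimT, dimI_self]
    exact one_pos
  · rw [dimT, dimI_eq_sum_lowerCovers (empty_subset l) hne.ne_empty.symm]
    refine sum_pos (fun ϰ hϰ => ?_) (lowerCovers_nonempty hl hne)
    have hcov := mem_lowerCovers.1 hϰ
    exact mul_pos (hκ _ _ hcov) (ih ϰ hcov.ssubset hcov.1)

end Dimension

section Operators

variable (κ : Finset P → Finset P → ℝ) (q : P → ℝ) (hLF : LevelsFinite P)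

/-- The real, finite-sum form of `Uop`. -/
noncomputable def lowerOp : (Finset P → ℝ) →ₗ[ℝ] Finset P → ℝ where
  toFun g l := ∑ ϰ ∈ lowerCovers l, κ ϰ l * bx q ϰ l * g ϰ
  map_add' f g := by
    ext l
    simp only [Pi.add_apply, mul_add, sum_add_distrib]
  map_smul' c g := by
    ext l
    simp only [Pi.smul_apply, smul_eq_mul, RingHom.id_apply, mul_sum]
    exact sum_congr rfl fun _ _ => by ring

/-- The real, finite-sum form of `Dop`. -/
noncomputable def upperOp : (Finset P → ℝ) →ₗ[ℝ] Finset P → ℝ where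
  toFun g l := ∑ ν ∈ upperCovers hLF l, κ l ν * bx q l ν * g ν
  map_add' f g := by
    ext l
    simp only [Pi.add_apply, mul_add, sum_add_distrib]
  map_smul' c g := by
    ext l
    simp only [Pi.smul_apply, smul_eq_mul, RingHom.id_apply, mul_sum]
    exact sum_congr rfl fun _ _ => by ring

variable {κ q hLF}

theorem lowerOp_apply (g : Finset P → ℝ) (l : Finset P) :
    lowerOp κ q g l = ∑ ϰ ∈ lowerCovers l, κ ϰ l * bx q ϰ l * g ϰ := rfl

theorem upperOp_apply (g : Finset P → ℝ) (l : Finset P) :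
    upperOp κ q hLF g l = ∑ ν ∈ upperCovers hLF l, κ l ν * bx q l ν * g ν := rfl

theorem lowerOp_congr {f g : Finset P → ℝ} {l : Finset P} (h : ∀ ϰ ∈ lowerCovers l, f ϰ = g ϰ) :
    lowerOp κ q f l = lowerOp κ q g l :=
  sum_congr rfl fun ϰ hϰ => by rw [h ϰ hϰ]

theorem upperOp_congr {f g : Finset P → ℝ} {l : Finset P} (h : ∀ ν ∈ upperCovers hLF l, f ν = g ν) :
    upperOp κ q hLF f l = upperOp κ q hLF g l :=
  sum_congr rfl fun ν hν => by rw [h ν hν]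

theorem upperOp_single (μ l : Finset P) :
    upperOp κ q hLF (Pi.single μ 1) l
      = ∑ ρ ∈ lowerCovers μ, κ ρ μ * bx q ρ μ * (Pi.single ρ 1 : Finset P → ℝ) l := by
  simp only [upperOp_apply, Pi.single_apply, mul_ite, mul_one, mul_zero, sum_ite_eq',
    sum_ite_eq, mem_upperCovers, mem_lowerCovers]

noncomputable def weightedDim (κ : Finset P → Finset P → ℝ) (q : P → ℝ) (μ l : Finset P) : ℝ :=
  dimI κ μ l * ∏ x ∈ l \ μ, q x

theorem weightedDim_eq_zero_of_not_subset {μ l : Finset P} (h : ¬μ ⊆ l) :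
    weightedDim κ q μ l = 0 := by
  rw [weightedDim, dimI_eq_zero_of_not_subset h, zero_mul]

theorem weightedDim_self (l : Finset P) : weightedDim κ q l l = 1 := by
  rw [weightedDim, dimI_self, Finset.sdiff_self, prod_empty, one_mul]

theorem lowerOp_weightedDim (μ : Finset P) :
    lowerOp κ q (weightedDim κ q μ) = weightedDim κ q μ - Pi.single μ 1 := by
  ext l
  rw [lowerOp_apply, Pi.sub_apply, Pi.single_apply]
  rcases eq_or_ne l μ with rfl | hne
  · rw [if_pos rfl, weightedDim_self, sub_self]
    refine sum_eq_zero fun ϰ hϰ => ?_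
    rw [weightedDim_eq_zero_of_not_subset (mem_lowerCovers.1 hϰ).ssubset.not_subset, mul_zero]
  rw [if_neg hne, sub_zero]
  by_cases hsub : μ ⊆ l
  · rw [weightedDim, dimI_eq_sum_lowerCovers hsub hne.symm, sum_mul]
    refine sum_congr rfl fun ϰ hϰ => ?_
    obtain ⟨a, ha, rfl⟩ := (mem_lowerCovers.1 hϰ).exists_eq_insert
    by_cases hμϰ : μ ⊆ ϰ
    · have haμ : a ∉ μ := fun h => ha (hμϰ h)
      rw [bx_insert _ ha, weightedDim, insert_sdiff_of_notMem _ haμ,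
        prod_insert fun h => ha (mem_sdiff.1 h).1]
      ring
    · rw [weightedDim_eq_zero_of_not_subset hμϰ, dimI_eq_zero_of_not_subset hμϰ]
      ring
  · rw [weightedDim_eq_zero_of_not_subset hsub]
    refine sum_eq_zero fun ϰ hϰ => ?_
    rw [weightedDim_eq_zero_of_not_subset fun h => hsub (h.trans (mem_lowerCovers.1 hϰ).2.2.1),
      mul_zero]

end Operators

section Commutation

variable {κ : Finset P → Finset P → ℝ} {q : P → ℝ} {t : ℝ} {hLF : LevelsFinite P} {l : Finset P}

theorem KerovCond.sum_upperCovers_sub_sum_lowerCovers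
    (hK : KerovCond κ (fun x => (q x : ℂ) ^ 2) t) (hl : IsIdealF l) :
    ∑ ν ∈ upperCovers hLF l, (κ l ν * bx q l ν) ^ 2
      - ∑ ϰ ∈ lowerCovers l, (κ ϰ l * bx q ϰ l) ^ 2 = 2 * l.card + t := by
  have hcast : ∀ {μ ν : Finset P}, CoversF μ ν →
      (κ μ ν : ℂ) ^ 2 * bx (fun x => (q x : ℂ) ^ 2) μ ν = (((κ μ ν * bx q μ ν) ^ 2 : ℝ) : ℂ) :=
    fun h => by
      rw [h.bx_pow (fun x => (q x : ℂ)), bx, bx]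
      push_cast
      ring
  have h := hK l hl
  rw [tsum_subtype_eq_sum (upperCovers hLF l) (fun _ => mem_upperCovers)
      (fun ν => (κ l ν : ℂ) ^ 2 * bx (fun x => (q x : ℂ) ^ 2) l ν),
    tsum_subtype_eq_sum (lowerCovers l) (fun _ => mem_lowerCovers)
      (fun ϰ => (κ ϰ l : ℂ) ^ 2 * bx (fun x => (q x : ℂ) ^ 2) ϰ l),
    sum_congr rfl fun ν hν => hcast (mem_upperCovers.1 hν),
    sum_congr rfl fun ϰ hϰ => hcast (mem_lowerCovers.1 hϰ)] at h
  exact_mod_cast h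

/-- Opposite sides of a quadrangle add the same box, so this is UD-self-duality times two boxes. -/
theorem UDSelfDual.quadrangle_weight (hUD : UDSelfDual κ) {ρ σ ν : Finset P} (hρl : CoversF ρ l)
    (hρσ : CoversF ρ σ) (hlν : CoversF l ν) (hσν : CoversF σ ν) (hne : σ ≠ l) :
    κ l ν * bx q l ν * (κ σ ν * bx q σ ν) = κ ρ l * bx q ρ l * (κ ρ σ * bx q ρ σ) := by
  have hcard : σ.card = l.card := by have := hρl.2.2.2; have := hρσ.2.2.2; omega
  have hσl : ¬σ ⊆ l := fun h => hne (eq_of_subset_of_card_le h hcard.ge)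
  have hlσ : ¬l ⊆ σ := fun h => hne (eq_of_subset_of_card_le h hcard.le).symm
  rw [hlν.bx_eq_bx hρσ hσν.2.2.1 hρl.2.2.1 hσl, hσν.bx_eq_bx hρl hlν.2.2.1 hρσ.2.2.1 hlσ]
  linear_combination (bx q ρ σ * bx q ρ l) * (hUD ρ σ l ν hρσ hσν hρl hlν hne).symm

theorem sum_upperCovers_lowerCovers_erase (hUD : UDSelfDual κ) (g : Finset P → ℝ) :
    ∑ ν ∈ upperCovers hLF l, ∑ ϰ ∈ (lowerCovers ν).erase l,
        κ l ν * bx q l ν * (κ ϰ ν * bx q ϰ ν * g ϰ)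
      = ∑ ρ ∈ lowerCovers l, ∑ σ ∈ (upperCovers hLF ρ).erase l,
        κ ρ l * bx q ρ l * (κ ρ σ * bx q ρ σ * g σ) := by
  rw [sum_sigma', sum_sigma']
  refine sum_nbij' (fun x => ⟨l ∩ x.2, x.2⟩) (fun y => ⟨l ∪ y.2, y.2⟩) ?_ ?_ ?_ ?_ ?_
  all_goals simp only [mem_sigma, mem_erase, mem_upperCovers, mem_lowerCovers, and_imp,
    Sigma.forall]
  · intro ν ϰ hlν hne hϰν
    obtain ⟨-, hρl, hρϰ⟩ := covers_inter_of_covers_of_covers hlν hϰν hne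
    exact ⟨hρl, hne, hρϰ⟩
  · intro ρ σ hρl hne hρσ
    obtain ⟨-, hlν, hσν⟩ := covers_union_of_covers_of_covers hρl hρσ hne
    exact ⟨hlν, hne, hσν⟩
  · intro ν ϰ hlν hne hϰν
    rw [← (covers_inter_of_covers_of_covers hlν hϰν hne).1]
  · intro ρ σ hρl hne hρσ
    rw [← (covers_union_of_covers_of_covers hρl hρσ hne).1]
  · intro ν ϰ hlν hne hϰν
    obtain ⟨hν, hρl, hρϰ⟩ := covers_inter_of_covers_of_covers hlν hϰν hne
    rw [← mul_assoc, hUD.quadrangle_weight hρl hρϰ hlν hϰν hne, mul_assoc]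

theorem upperOp_lowerOp (hUD : UDSelfDual κ) (hK : KerovCond κ (fun x => (q x : ℂ) ^ 2) t)
    (hl : IsIdealF l) (g : Finset P → ℝ) :
    upperOp κ q hLF (lowerOp κ q g) l
      = lowerOp κ q (upperOp κ q hLF g) l + (2 * l.card + t) * g l := by
  have hD : upperOp κ q hLF (lowerOp κ q g) l
      = (∑ ν ∈ upperCovers hLF l, (κ l ν * bx q l ν) ^ 2) * g l
        + ∑ ν ∈ upperCovers hLF l, ∑ ϰ ∈ (lowerCovers ν).erase l,
            κ l ν * bx q l ν * (κ ϰ ν * bx q ϰ ν * g ϰ) := by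
    rw [upperOp_apply, sum_mul, ← sum_add_distrib]
    refine sum_congr rfl fun ν hν => ?_
    rw [lowerOp_apply, ← add_sum_erase _ _ (mem_lowerCovers.2 (mem_upperCovers.1 hν)), mul_add,
      mul_sum]
    ring
  have hU : lowerOp κ q (upperOp κ q hLF g) l
      = (∑ ρ ∈ lowerCovers l, (κ ρ l * bx q ρ l) ^ 2) * g l
        + ∑ ρ ∈ lowerCovers l, ∑ σ ∈ (upperCovers hLF ρ).erase l,
            κ ρ l * bx q ρ l * (κ ρ σ * bx q ρ σ * g σ) := by
    rw [lowerOp_apply, sum_mul, ← sum_add_distrib]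
    refine sum_congr rfl fun ρ hρ => ?_
    rw [upperOp_apply, ← add_sum_erase _ _ (mem_upperCovers.2 (mem_lowerCovers.1 hρ)), mul_add,
      mul_sum]
    ring
  rw [hD, hU, sum_upperCovers_lowerCovers_erase hUD,
    ← hK.sum_upperCovers_sub_sum_lowerCovers (hLF := hLF) hl]
  ring


theorem upperOp_weightedDim (hUD : UDSelfDual κ) (hK : KerovCond κ (fun x => (q x : ℂ) ^ 2) t)
    (μ : Finset P) (hl : IsIdealF l) :
    upperOp κ q hLF (weightedDim κ q μ) l
      = ((l.card : ℝ) - μ.card + 1) * (l.card + μ.card + t) * weightedDim κ q μ l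
        + ∑ ρ ∈ lowerCovers μ, κ ρ μ * bx q ρ μ * weightedDim κ q ρ l := by
  induction l using Finset.strongInduction with
  | H l ih =>
  set c : ℝ := ((l.card : ℝ) - μ.card) * (l.card - 1 + μ.card + t)
  have hbelow : ∀ ϰ ∈ lowerCovers l, upperOp κ q hLF (weightedDim κ q μ) ϰ
      = (c • weightedDim κ q μ
          + ∑ ρ ∈ lowerCovers μ, (κ ρ μ * bx q ρ μ) • weightedDim κ q ρ) ϰ := by
    intro ϰ hϰ
    have hcov := mem_lowerCovers.1 hϰ
    have hcard : (ϰ.card : ℝ) = l.card - 1 := by rw [hcov.2.2.2]; push_cast; ring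
    rw [ih ϰ hcov.ssubset hcov.1, hcard]
    simp only [Pi.add_apply, Pi.smul_apply, smul_eq_mul, Finset.sum_apply, c]
    ring
  have hsplit : weightedDim κ q μ = lowerOp κ q (weightedDim κ q μ) + Pi.single μ 1 := by
    rw [lowerOp_weightedDim, sub_add_cancel]
  have hdiag : c * (Pi.single μ 1 : Finset P → ℝ) l = 0 := by
    rcases eq_or_ne l μ with rfl | hne
    · simp only [c, sub_self, zero_mul]
    · rw [Pi.single_apply, if_neg hne, mul_zero]
  calc upperOp κ q hLF (weightedDim κ q μ) l
      = upperOp κ q hLF (lowerOp κ q (weightedDim κ q μ)) l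
        + upperOp κ q hLF (Pi.single μ 1) l := by
        conv_lhs => rw [hsplit]
        rw [map_add, Pi.add_apply]
    _ = lowerOp κ q (c • weightedDim κ q μ
            + ∑ ρ ∈ lowerCovers μ, (κ ρ μ * bx q ρ μ) • weightedDim κ q ρ) l
        + (2 * l.card + t) * weightedDim κ q μ l + upperOp κ q hLF (Pi.single μ 1) l := by
        rw [upperOp_lowerOp hUD hK hl, lowerOp_congr hbelow]
    _ = c * (weightedDim κ q μ l - (Pi.single μ 1 : Finset P → ℝ) l)
        + ∑ ρ ∈ lowerCovers μ, κ ρ μ * bx q ρ μ * weightedDim κ q ρ l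
        + (2 * l.card + t) * weightedDim κ q μ l := by
        simp only [map_add, map_smul, map_sum, lowerOp_weightedDim, upperOp_single, Pi.add_apply,
          Pi.smul_apply, Pi.sub_apply, Finset.sum_apply, smul_eq_mul, mul_sub, sum_sub_distrib]
        ring
    _ = _ := by
        rw [mul_sub, hdiag]
        ring

end Commutation

section MixedMeasure

variable {κ : Finset P → Finset P → ℝ} {q : P → ℝ} {t ξ : ℝ}

/-- The function `𝓘_ξ P*_μ` of the paper. -/
noncomputable def mixedPstar (κ : Finset P → Finset P → ℝ) (q : P → ℝ) (t ξ : ℝ)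
    (μ l : Finset P) : ℝ :=
  √(Mxi κ q t ξ l) * Pstar κ μ l

noncomputable def levelFactor (ξ : ℝ) (n m : ℕ) : ℝ :=
  √ξ ^ n * (n.descFactorial m / n.factorial : ℝ)

theorem levelFactor_succ (ξ : ℝ) (n m : ℕ) :
    ((n : ℝ) + 1 - m) * levelFactor ξ (n + 1) m = √ξ * levelFactor ξ n m := by
  have hfac : (n.factorial : ℝ) ≠ 0 := Nat.cast_ne_zero.2 n.factorial_ne_zero
  rw [levelFactor, levelFactor, Nat.factorial_succ, pow_succ]
  push_cast
  field_simp
  rcases le_or_gt m (n + 1) with hm | hm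
  · have h := congrArg (Nat.cast (R := ℝ)) (Nat.succ_descFactorial n m)
    push_cast [Nat.cast_sub hm] at h
    linear_combination √ξ ^ n * √ξ * h
  · rw [Nat.descFactorial_eq_zero_iff_lt.2 hm, Nat.descFactorial_eq_zero_iff_lt.2 (by omega)]
    simp

theorem levelFactor_succ_succ (ξ : ℝ) (n m : ℕ) :
    levelFactor ξ (n + 1) (m + 1) = √ξ * levelFactor ξ n m := by
  have hfac : (n.factorial : ℝ) ≠ 0 := Nat.cast_ne_zero.2 n.factorial_ne_zero
  rw [levelFactor, levelFactor, Nat.succ_descFactorial_succ, Nat.factorial_succ, pow_succ]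
  push_cast
  field_simp

theorem mixedPstar_eq_mul_weightedDim (hκ : EdgePositive κ) (hq : ∀ x, 0 < q x) (hξ : 0 ≤ ξ)
    (μ : Finset P) {l : Finset P} (hl : IsIdealF l) :
    mixedPstar κ q t ξ μ l
      = √((1 - ξ) ^ t) * (∏ x ∈ μ, q x) * levelFactor ξ l.card μ.card * weightedDim κ q μ l := by
  have hT := dimT_pos hκ hl
  have hsqrt_pow : √(ξ ^ l.card) = √ξ ^ l.card := by
    rw [← Real.sqrt_sq (pow_nonneg (Real.sqrt_nonneg ξ) l.card), ← pow_mul, mul_comm, pow_mul,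
      Real.sq_sqrt hξ]
  have hsqrt : √(Mxi κ q t ξ l)
      = √((1 - ξ) ^ t) * √ξ ^ l.card * (dimT κ l / l.card.factorial) * ∏ x ∈ l, q x := by
    rw [Mxi, prod_pow, Real.sqrt_mul' _ (sq_nonneg _), Real.sqrt_mul' _ (sq_nonneg _),
      Real.sqrt_mul' _ (pow_nonneg hξ _), hsqrt_pow, Real.sqrt_sq (by positivity),
      Real.sqrt_sq (prod_nonneg fun x _ => (hq x).le)]
  by_cases hsub : μ ⊆ l
  · rw [mixedPstar, hsqrt, Pstar, levelFactor, weightedDim, ← prod_sdiff hsub]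
    field_simp
  · rw [mixedPstar, Pstar, dimI_eq_zero_of_not_subset hsub, weightedDim_eq_zero_of_not_subset hsub]
    simp

theorem lowerOp_mixedPstar (hκ : EdgePositive κ) (hq : ∀ x, 0 < q x) (hξ : 0 < ξ)
    (μ : Finset P) {l : Finset P} (hl : IsIdealF l) :
    lowerOp κ q (mixedPstar κ q t ξ μ) l
      = (√ξ)⁻¹ * ((l.card : ℝ) - μ.card) * mixedPstar κ q t ξ μ l := by
  have hbelow : ∀ ϰ ∈ lowerCovers l, mixedPstar κ q t ξ μ ϰ
      = ((√((1 - ξ) ^ t) * (∏ x ∈ μ, q x) * levelFactor ξ (l.card - 1) μ.card)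
          • weightedDim κ q μ) ϰ := by
    intro ϰ hϰ
    have hcov := mem_lowerCovers.1 hϰ
    rw [mixedPstar_eq_mul_weightedDim hκ hq hξ.le μ hcov.1, hcov.2.2.2, Nat.add_sub_cancel]
    rfl
  rw [lowerOp_congr hbelow, map_smul, lowerOp_weightedDim,
    mixedPstar_eq_mul_weightedDim hκ hq hξ.le μ hl, Pi.smul_apply, Pi.sub_apply, Pi.single_apply,
    smul_eq_mul]
  rcases eq_or_ne l μ with rfl | hne
  · simp [weightedDim_self]
  rw [if_neg hne, sub_zero]
  by_cases hsub : μ ⊆ l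
  · obtain ⟨k, hk⟩ : ∃ k, l.card = k + 1 :=
      ⟨l.card - 1, by have := card_lt_card (ssubset_of_subset_of_ne hsub hne.symm); omega⟩
    have hsξ : √ξ ≠ 0 := (Real.sqrt_pos.2 hξ).ne'
    rw [hk, Nat.add_sub_cancel]
    push_cast
    field_simp
    linear_combination (√((1 - ξ) ^ t) * (∏ x ∈ μ, q x) * weightedDim κ q μ l)
      * (levelFactor_succ ξ k μ.card).symm
  · rw [weightedDim_eq_zero_of_not_subset hsub]
    ring

theorem upperOp_mixedPstar (hκ : EdgePositive κ) (hq : ∀ x, 0 < q x) (hξ : 0 ≤ ξ)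
    {hLF : LevelsFinite P} (hUD : UDSelfDual κ) (hK : KerovCond κ (fun x => (q x : ℂ) ^ 2) t)
    (μ : Finset P) {l : Finset P} (hl : IsIdealF l) :
    upperOp κ q hLF (mixedPstar κ q t ξ μ) l
      = √ξ * ((l.card : ℝ) + μ.card + t) * mixedPstar κ q t ξ μ l
        + √ξ * ∑ ρ ∈ lowerCovers μ, κ ρ μ * bx q ρ μ ^ 2 * mixedPstar κ q t ξ ρ l := by
  have habove : ∀ ν ∈ upperCovers hLF l, mixedPstar κ q t ξ μ ν
      = ((√((1 - ξ) ^ t) * (∏ x ∈ μ, q x) * levelFactor ξ (l.card + 1) μ.card)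
          • weightedDim κ q μ) ν := by
    intro ν hν
    have hcov := mem_upperCovers.1 hν
    rw [mixedPstar_eq_mul_weightedDim hκ hq hξ μ hcov.2.1, hcov.2.2.2]
    rfl
  rw [upperOp_congr habove, map_smul, Pi.smul_apply, smul_eq_mul, upperOp_weightedDim hUD hK μ hl,
    mixedPstar_eq_mul_weightedDim hκ hq hξ μ hl, mul_add, mul_sum, mul_sum]
  congr 1
  · linear_combination (√((1 - ξ) ^ t) * (∏ x ∈ μ, q x) * ((l.card : ℝ) + μ.card + t)
      * weightedDim κ q μ l) * levelFactor_succ ξ l.card μ.card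
  · refine sum_congr rfl fun ρ hρ => ?_
    have hcov := mem_lowerCovers.1 hρ
    obtain ⟨a, ha, hμa⟩ := hcov.exists_eq_insert
    have hbx : bx q ρ μ = q a := hμa ▸ bx_insert q ha
    rw [mixedPstar_eq_mul_weightedDim hκ hq hξ ρ hl, hbx, hμa, prod_insert ha,
      card_insert_of_notMem ha, levelFactor_succ_succ]
    ring

end MixedMeasure

theorem statement8_general {P : Type*} [PartialOrder P]
    (κ : Finset P → Finset P → ℝ) (q : P → ℝ) (t ξ : ℝ)
    (hκ : EdgePositive κ) (hq : ∀ x : P, 0 < q x)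
    (hξ0 : 0 < ξ)
    (hLF : LevelsFinite P) (hUD : UDSelfDual κ)
    (hK : KerovCond κ (fun x => ((q x : ℂ)) ^ 2) (t : ℂ)) :
    ∀ μ l : Finset P, IsIdealF μ → IsIdealF l →
      ((∑' ϰ : {ϰ : Finset P // CoversF ϰ l},
          κ ϰ.1 l * bx q ϰ.1 l * Real.sqrt (Mxi κ q t ξ ϰ.1) * Pstar κ μ ϰ.1)
        = (Real.sqrt ξ)⁻¹ * ((l.card : ℝ) - (μ.card : ℝ)) *
            (Real.sqrt (Mxi κ q t ξ l) * Pstar κ μ l)) ∧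
      ((∑' ν : {ν : Finset P // CoversF l ν},
          κ l ν.1 * bx q l ν.1 * Real.sqrt (Mxi κ q t ξ ν.1) * Pstar κ μ ν.1)
        = Real.sqrt ξ * ((l.card : ℝ) + (μ.card : ℝ) + t) *
            (Real.sqrt (Mxi κ q t ξ l) * Pstar κ μ l)
          + Real.sqrt ξ *
              ∑' ρ : {ρ : Finset P // CoversF ρ μ},
                κ ρ.1 μ * (bx q ρ.1 μ) ^ 2 *
                  (Real.sqrt (Mxi κ q t ξ l) * Pstar κ ρ.1 l)) := by
  intro μ l _ hl
  constructor
  · rw [tsum_subtype_eq_sum (lowerCovers l) (fun _ => mem_lowerCovers)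
      fun ϰ => κ ϰ l * bx q ϰ l * √(Mxi κ q t ξ ϰ) * Pstar κ μ ϰ]
    simpa only [lowerOp_apply, mixedPstar, mul_assoc] using
      lowerOp_mixedPstar (t := t) hκ hq hξ0 μ hl
  · rw [tsum_subtype_eq_sum (upperCovers hLF l) (fun _ => mem_upperCovers)
      fun ν => κ l ν * bx q l ν * √(Mxi κ q t ξ ν) * Pstar κ μ ν,
      tsum_subtype_eq_sum (lowerCovers μ) (fun _ => mem_lowerCovers)
      fun ρ => κ ρ μ * bx q ρ μ ^ 2 * (√(Mxi κ q t ξ l) * Pstar κ ρ l)]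
    simpa only [upperOp_apply, mixedPstar, mul_assoc] using
      upperOp_mixedPstar hκ hq hξ0.le hUD hK μ hl (hLF := hLF)

/-- action of the Kerov operators `U` and `D` on the functions `𝓘_ξ P*_μ`. -/
theorem statement8 {P : Type*} [PartialOrder P]
    (κ : Finset P → Finset P → ℝ) (q : P → ℝ) (t ξ : ℝ)
    (hκ : EdgePositive κ) (hq : ∀ x : P, 0 < q x) (ht : 0 < t)
    (hξ0 : 0 < ξ) (hξ1 : ξ < 1)
    (hLF : LevelsFinite P) (hUD : UDSelfDual κ)
    (hK : KerovCond κ (fun x => ((q x : ℂ)) ^ 2) (t : ℂ)) :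
    ∀ μ l : Finset P, IsIdealF μ → IsIdealF l →
      ((∑' ϰ : {ϰ : Finset P // CoversF ϰ l},
          κ ϰ.1 l * bx q ϰ.1 l * Real.sqrt (Mxi κ q t ξ ϰ.1) * Pstar κ μ ϰ.1)
        = (Real.sqrt ξ)⁻¹ * ((l.card : ℝ) - (μ.card : ℝ)) *
            (Real.sqrt (Mxi κ q t ξ l) * Pstar κ μ l)) ∧
      ((∑' ν : {ν : Finset P // CoversF l ν},
          κ l ν.1 * bx q l ν.1 * Real.sqrt (Mxi κ q t ξ ν.1) * Pstar κ μ ν.1)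
        = Real.sqrt ξ * ((l.card : ℝ) + (μ.card : ℝ) + t) *
            (Real.sqrt (Mxi κ q t ξ l) * Pstar κ μ l)
          + Real.sqrt ξ *
              ∑' ρ : {ρ : Finset P // CoversF ρ μ},
                κ ρ.1 μ * (bx q ρ.1 μ) ^ 2 *
                  (Real.sqrt (Mxi κ q t ξ l) * Pstar κ ρ.1 l)) :=
  statement8_general κ q t ξ hκ hq hξ0 hLF hUD hK

end IdealGraph
end
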